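/- arXiv:2310.01528 — 2 statements merged into one kernel-verified Lean document; each statement's English description precedes it below -/
import Mathlib

section
/- A mixed strategy profile σ satisfies T(σ) = 0 if and only if σ is a Nash equilibrium. -/
open Finset Filter Topology

variable {I : Type*} [Fintype I] [DecidableEq I] [Nonempty I]
  {S : I → Type*} [∀ i, Fintype (S i)] [∀ i, DecidableEq (S i)] [∀ i, Nonempty (S i)]

/-- `σ` is a mixed strategy profile: each `σ i` is a probability distribution on `S i`. -/
def IsMixedProfile (σ : ∀ i, S i → ℝ) : Prop :=
  (∀ i s, 0 ≤ σ i s) ∧ ∀ i, ∑ s, σ i s = 1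

/-- Expected payoff `f i σ` of player `i` at profile `σ`, the multilinear extension of `g i`. -/
noncomputable def payoff (g : ∀ _i : I, (∀ j, S j) → ℝ) (i : I) (σ : ∀ j, S j → ℝ) : ℝ :=
  ∑ s : ∀ j, S j, (∏ j, σ j (s j)) * g i s

/-- The degenerate distribution assigning probability 1 to `s`. -/
def pureDist {i : I} (s : S i) : S i → ℝ := fun t => if t = s then 1 else 0

/-- `switch σ i s` is `σ(i,s)`: the profile `σ` with `σ i` replaced by the degenerate
distribution at `s`. -/
def switch (σ : ∀ j, S j → ℝ) (i : I) (s : S i) : ∀ j, S j → ℝ :=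
  Function.update σ i (pureDist s)

/-- `A_i^s(σ) = max (f_i(σ(i,s)) - f_i(σ)) 0`. -/
noncomputable def Adev (g : ∀ _i : I, (∀ j, S j) → ℝ) (i : I) (s : S i)
    (σ : ∀ j, S j → ℝ) : ℝ :=
  max (payoff g i (switch σ i s) - payoff g i σ) 0

/-- `A_i(σ) = max_{s ∈ S_i} A_i^s(σ)`. -/
noncomputable def Abest (g : ∀ _i : I, (∀ j, S j) → ℝ) (i : I) (σ : ∀ j, S j → ℝ) : ℝ :=
  Finset.univ.sup' Finset.univ_nonempty (fun s : S i => Adev g i s σ)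

/-- `T(σ) = ∑_i A_i(σ)`. -/
noncomputable def Tval (g : ∀ _i : I, (∀ j, S j) → ℝ) (σ : ∀ j, S j → ℝ) : ℝ :=
  ∑ i, Abest g i σ

/-- `σ` is a Nash equilibrium: no player can improve by a unilateral mixed deviation. -/
def IsNash (g : ∀ _i : I, (∀ j, S j) → ℝ) (σ : ∀ j, S j → ℝ) : Prop :=
  ∀ (i : I) (τ : S i → ℝ), (∀ s, 0 ≤ τ s) → ∑ s, τ s = 1 →
    payoff g i (Function.update σ i τ) ≤ payoff g i σ

/-- `r` is a root function for the game `g`. -/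
def IsRootFun (g : ∀ _i : I, (∀ j, S j) → ℝ) (r : (∀ j, S j → ℝ) → ∀ j, S j) : Prop :=
  ∀ σ, IsMixedProfile σ → ∀ i,
    0 < σ i (r σ i) ∧ payoff g i (switch σ i (r σ i)) ≤ payoff g i σ

/-- `R` is a pre-equilibrium: a set of mixed strategy profiles mapped onto the set of all
pure strategy profiles by some root function. -/
def IsPreEquilibrium (g : ∀ _i : I, (∀ j, S j) → ℝ) (R : Set (∀ j, S j → ℝ)) : Prop :=
  (∀ σ ∈ R, IsMixedProfile σ) ∧
    ∃ r, IsRootFun g r ∧ ∀ s : ∀ j, S j, ∃ σ ∈ R, r σ = s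
lemma prod_update_eval (σ : ∀ j, S j → ℝ) (i : I) (τ : S i → ℝ) (s : ∀ j, S j) :
    ∏ j, Function.update σ i τ j (s j) = τ (s i) * ∏ j ∈ Finset.univ.erase i, σ j (s j) := by
  rw [← Finset.mul_prod_erase Finset.univ _ (Finset.mem_univ i)]
  congr 1
  · rw [Function.update_self]
  · exact Finset.prod_congr rfl fun j hj => by
      rw [Function.update_of_ne (Finset.mem_erase.1 hj).1]

lemma payoff_update_eq_sum (g : ∀ _i : I, (∀ j, S j) → ℝ) (σ : ∀ j, S j → ℝ)
    (i : I) (τ : S i → ℝ) :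
    payoff g i (Function.update σ i τ) = ∑ t, τ t * payoff g i (switch σ i t) := by
  unfold payoff switch
  simp only [Finset.mul_sum]
  rw [Finset.sum_comm]
  refine Finset.sum_congr rfl fun s _ => ?_
  rw [prod_update_eval]
  have : ∀ t : S i, τ t * ((∏ j, Function.update σ i (pureDist t) j (s j)) * g i s)
      = (if s i = t then τ t * ((∏ j ∈ Finset.univ.erase i, σ j (s j)) * g i s) else 0) := by
    intro t
    rw [prod_update_eval]
    unfold pureDist
    by_cases h : s i = t <;> simp [h] <;> ring
  simp only [this, Finset.sum_ite_eq, Finset.mem_univ, if_true]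
  ring

lemma payoff_switch_le (g : ∀ _i : I, (∀ j, S j) → ℝ) (σ : ∀ j, S j → ℝ)
    (hN : IsNash g σ) (i : I) (t : S i) :
    payoff g i (switch σ i t) ≤ payoff g i σ := by
  have := hN i (pureDist t) (fun s => by unfold pureDist; split <;> norm_num)
    (by unfold pureDist; simp)
  exact this

/-- `T(σ) = 0` iff `σ` is a Nash equilibrium. -/
theorem Tval_eq_zero_iff_isNash (g : ∀ _i : I, (∀ j, S j) → ℝ)
    (σ : ∀ j, S j → ℝ) (hσ : IsMixedProfile σ) :
    Tval g σ = 0 ↔ IsNash g σ := by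
  have hAdev_nonneg : ∀ (i : I) (s : S i), 0 ≤ Adev g i s σ := fun i s => le_max_right _ _
  have hAbest_nonneg : ∀ i : I, 0 ≤ Abest g i σ := fun i => by
    obtain ⟨s⟩ := ‹∀ i, Nonempty (S i)› i
    exact le_trans (hAdev_nonneg i s) (Finset.le_sup' (fun t => Adev g i t σ) (Finset.mem_univ s))
  constructor
  · intro hT i τ hτ hτ1
    have hAbest0 : ∀ i : I, Abest g i σ = 0 := by
      intro j
      have := (Finset.sum_eq_zero_iff_of_nonneg (fun k _ => hAbest_nonneg k)).1 hT j
        (Finset.mem_univ j)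
      exact this
    have hdev : ∀ t : S i, payoff g i (switch σ i t) ≤ payoff g i σ := by
      intro t
      have h1 : Adev g i t σ ≤ 0 := by
        rw [← hAbest0 i]
        exact Finset.le_sup' (fun u => Adev g i u σ) (Finset.mem_univ t)
      have h2 := hAdev_nonneg i t
      have : Adev g i t σ = 0 := le_antisymm h1 h2
      unfold Adev at this
      have := le_of_eq this
      have h3 : payoff g i (switch σ i t) - payoff g i σ ≤ 0 :=
        le_trans (le_max_left _ _) this
      linarith
    rw [payoff_update_eq_sum]
    calc ∑ t, τ t * payoff g i (switch σ i t) ≤ ∑ t, τ t * payoff g i σ := by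
          apply Finset.sum_le_sum
          intro t _
          exact mul_le_mul_of_nonneg_left (hdev t) (hτ t)
      _ = payoff g i σ := by rw [← Finset.sum_mul, hτ1, one_mul]
  · intro hN
    unfold Tval
    apply Finset.sum_eq_zero
    intro i _
    refine le_antisymm ?_ (hAbest_nonneg i)
    apply Finset.sup'_le
    intro t _
    unfold Adev
    have := payoff_switch_le g σ hN i t
    apply max_le <;> linarith
end

section
/- Let (R_m) be a sequence of pre-equilibria whose diameters tend to 0, let σ^m ∈ R_m for each m, and suppose σ^m converges to a mixed strategy profile σ. Then σ is a Nash equilibrium. -/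
open Finset Filter Topology

variable {I : Type*} [Fintype I] [DecidableEq I] [Nonempty I]
  {S : I → Type*} [∀ i, Fintype (S i)] [∀ i, DecidableEq (S i)] [∀ i, Nonempty (S i)]

lemma continuous_payoff (g : ∀ _i : I, (∀ j, S j) → ℝ) (i : I) :
    Continuous fun σ : ∀ j, S j → ℝ => payoff g i σ := by
  unfold payoff
  refine continuous_finset_sum _ fun s _ => ?_
  exact (continuous_finset_prod _ fun j _ =>
    (continuous_apply (s j)).comp (continuous_apply j)).mul continuous_const

lemma continuous_switch (i : I) (s : S i) :
    Continuous fun σ : ∀ j, S j → ℝ => switch σ i s := by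
  unfold switch
  refine continuous_pi fun j => ?_
  by_cases h : j = i
  · subst h
    simp only [Function.update_self]
    exact continuous_const
  · simp only [Function.update_of_ne h]
    exact continuous_apply j

lemma payoff_update (g : ∀ _i : I, (∀ j, S j) → ℝ) (i : I) (σ : ∀ j, S j → ℝ)
    (τ : S i → ℝ) :
    payoff g i (Function.update σ i τ) = ∑ t, τ t * payoff g i (switch σ i t) := by
  classical
  have hprod : ∀ (v : S i → ℝ) (s : ∀ j, S j),
      (∏ j, Function.update σ i v j (s j)) = v (s i) * ∏ j ∈ {i}ᶜ, σ j (s j) := by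
    intro v s
    rw [Fintype.prod_eq_mul_prod_compl i]
    simp only [Function.update_self]
    congr 1
    refine Finset.prod_congr rfl fun j hj => ?_
    rw [Function.update_of_ne (by simpa using hj)]
  unfold payoff switch
  simp only [Finset.mul_sum, hprod]
  rw [Finset.sum_comm]
  refine Finset.sum_congr rfl fun s _ => ?_
  simp only [pureDist, mul_ite, ite_mul, one_mul, mul_zero, zero_mul, mul_one,
    Finset.sum_ite_eq, Finset.mem_univ, if_true, mul_assoc]

/-- A limit of points of pre-equilibria with diameters tending to `0` is a Nash equilibrium. -/
theorem isNash_of_tendsto_pre_equilibria (g : ∀ _i : I, (∀ j, S j) → ℝ)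
    (R : ℕ → Set (∀ j, S j → ℝ)) (hR : ∀ m, IsPreEquilibrium g (R m))
    (hdiam : Tendsto (fun m => Metric.diam (R m)) atTop (𝓝 0))
    (σm : ℕ → ∀ j, S j → ℝ) (hmem : ∀ m, σm m ∈ R m)
    (σ : ∀ j, S j → ℝ) (hσ : IsMixedProfile σ)
    (hconv : Tendsto σm atTop (𝓝 σ)) :
    IsNash g σ := by
  classical
  -- every element of R m lies in the closed ball of radius 1
  have hball : ∀ m, ∀ τ ∈ R m, τ ∈ Metric.closedBall (0 : ∀ j, S j → ℝ) 1 := by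
    intro m τ hτ
    obtain ⟨hpos, hsum⟩ := (hR m).1 τ hτ
    rw [Metric.mem_closedBall, dist_pi_le_iff zero_le_one]
    intro j
    rw [dist_pi_le_iff zero_le_one]
    intro t
    have h1 : τ j t ≤ 1 := by
      calc τ j t ≤ ∑ u, τ j u :=
            Finset.single_le_sum (fun u _ => hpos j u) (Finset.mem_univ t)
        _ = 1 := hsum j
    simp only [Pi.zero_apply, Real.dist_eq, sub_zero]
    rw [abs_le]
    exact ⟨by linarith [hpos j t], h1⟩
  have hbdd : ∀ m, Bornology.IsBounded (R m) :=
    fun m => Metric.isBounded_closedBall.subset (fun x hx => hball m x hx)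
  have key : ∀ (i : I) (s : S i), payoff g i (switch σ i s) ≤ payoff g i σ := by
    intro i s
    set p : ∀ j, S j := Function.update (fun j => Classical.arbitrary (S j)) i s with hp
    have H : ∀ m, ∃ τ ∈ R m, payoff g i (switch τ i s) ≤ payoff g i τ := by
      intro m
      obtain ⟨hmix, r, hroot, hsurj⟩ := hR m
      obtain ⟨τ, hτR, hτ⟩ := hsurj p
      have h2 := (hroot τ (hmix τ hτR) i).2
      have hri : r τ i = s := by rw [hτ, hp, Function.update_self]
      rw [hri] at h2
      exact ⟨τ, hτR, h2⟩
    choose τm hτmem hτle using H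
    -- τm → σ
    have hd1 : Tendsto (fun m => dist (τm m) (σm m)) atTop (𝓝 0) := by
      refine squeeze_zero (fun m => dist_nonneg) (fun m => ?_) hdiam
      exact Metric.dist_le_diam_of_mem (hbdd m) (hτmem m) (hmem m)
    have hd2 : Tendsto (fun m => dist (σm m) σ) atTop (𝓝 0) :=
      tendsto_iff_dist_tendsto_zero.mp hconv
    have hτconv : Tendsto τm atTop (𝓝 σ) := by
      rw [tendsto_iff_dist_tendsto_zero]
      refine squeeze_zero (fun m => dist_nonneg) (fun m => dist_triangle _ (σm m) _) ?_
      simpa using hd1.add hd2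
    have hA : Tendsto (fun m => payoff g i (switch (τm m) i s)) atTop
        (𝓝 (payoff g i (switch σ i s))) :=
      (((continuous_payoff g i).comp (continuous_switch i s)).tendsto σ).comp hτconv
    have hB : Tendsto (fun m => payoff g i (τm m)) atTop (𝓝 (payoff g i σ)) :=
      ((continuous_payoff g i).tendsto σ).comp hτconv
    exact le_of_tendsto_of_tendsto' hA hB hτle
  intro i τ hτ hsum
  rw [payoff_update]
  calc ∑ t, τ t * payoff g i (switch σ i t)
      ≤ ∑ t, τ t * payoff g i σ :=
        Finset.sum_le_sum fun t _ => mul_le_mul_of_nonneg_left (key i t) (hτ t)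
    _ = payoff g i σ := by rw [← Finset.sum_mul, hsum, one_mul]
end
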